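/- arXiv:1210.3398 — 2 statements merged into one kernel-verified Lean document; each statement's English description precedes it below -/
import Mathlib

section
/- Define z : (0,∞) → [0,∞) by z = sup_{k≥0} e^{k−e^k}·χ_{[0, e^{e^k})}. Then lim_{n→∞} (1/log(1+e^{e^n}))∫₀^{e^{e^n}} z(s)ds = e/(e−1), while lim_{n→∞} (1/log(1+t_n))∫₀^{t_n} z(s)ds = 1/(e−1) + 1/2 where t_n = (e^{e^{n+1}}+e^{e^n})/2. In particular lim_{t→∞}(1/log(1+t))∫₀^t z(s)ds does not exist. -/
/-!
On `[e^{e^k}, e^{e^{k+1}})` the function `z` equals `e^{k+1-e^{k+1}}`, so this block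
contributes `e^{k+1}` minus a summable defect to the integral. Hence
`∫₀^{e^{e^n}} z = e^{n+1}/(e-1) + O(1)`, and halfway through the next block the integral has
grown by a further `e^{n+1}/2 + O(1)`. At both points `log (1 + t)` is `e^n`, resp. `e^{n+1}`,
up to `log 2`, so the two averages tend to `e/(e-1)` and `1/(e-1) + 1/2`, which differ by `1/2`.
-/

open Real Filter MeasureTheory

noncomputable section

/-- The function `z = sup_{k≥0} e^{k-e^k} χ_{[0, e^{e^k})}`. -/
def z : ℝ → ℝ := fun t =>
  ⨆ k : ℕ, Set.indicator (Set.Ico (0:ℝ) (Real.exp (Real.exp k)))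
    (fun _ => Real.exp (k - Real.exp k)) t

open Asymptotics Set Topology

theorem intervalIntegral_eq_of_eqOn_Ioo {f : ℝ → ℝ} {a b c : ℝ} (hab : a ≤ b)
    (h : EqOn f (fun _ => c) (Ioo a b)) : ∫ x in a..b, f x = (b - a) * c := by
  rw [intervalIntegral.integral_of_le hab, integral_Ioc_eq_integral_Ioo,
    setIntegral_congr_fun measurableSet_Ioo h, setIntegral_const, volume_real_Ioo_of_le hab,
    smul_eq_mul]

section

variable {ι : Type*} {l : Filter ι}

theorem tendsto_inv_mul_of_sub_isBigO_one {a b x : ι → ℝ} {α : ℝ}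
    (hx : Tendsto x l atTop) (ha : (fun i => a i - α * x i) =O[l] (fun _ => (1 : ℝ)))
    (hb : (fun i => b i - x i) =O[l] (fun _ => (1 : ℝ))) :
    Tendsto (fun i => (b i)⁻¹ * a i) l (𝓝 α) := by
  have hx_one : (fun _ => (1 : ℝ)) =o[l] x :=
    (isLittleO_one_left_iff ℝ).2 (tendsto_norm_atTop_atTop.comp hx)
  have hx_pos : ∀ᶠ i in l, 0 < x i := hx.eventually_gt_atTop 0
  have ha' : Tendsto (fun i => (a i - α * x i) / x i + α) l (𝓝 (0 + α)) :=
    (ha.trans_isLittleO hx_one).tendsto_div_nhds_zero.add_const α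
  have hb' : Tendsto (fun i => (b i - x i) / x i + 1) l (𝓝 (0 + 1)) :=
    (hb.trans_isLittleO hx_one).tendsto_div_nhds_zero.add_const 1
  rw [zero_add] at ha' hb'
  have h := (hb'.inv₀ one_ne_zero).mul ha'
  rw [inv_one, one_mul] at h
  refine h.congr' ?_
  filter_upwards [hx_pos] with i hi
  field_simp
  ring

theorem abs_log_one_add_sub_log_le {s y : ℝ} (hy : 1 ≤ y) (hs : y / 2 ≤ s) (hsy : s ≤ y) :
    |log (1 + s) - log y| ≤ log 2 := by
  have hy0 : 0 < y := by linarith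
  rw [abs_le]
  constructor
  · have := log_le_log (by positivity) (show y / 2 ≤ 1 + s by linarith)
    rw [log_div hy0.ne' two_ne_zero] at this
    linarith
  · have := log_le_log (by linarith) (show 1 + s ≤ 2 * y by linarith)
    rw [log_mul two_ne_zero hy0.ne'] at this
    linarith

theorem isBigO_log_one_add_sub_log {s y : ι → ℝ} (hy : ∀ i, 1 ≤ y i)
    (hs : ∀ i, y i / 2 ≤ s i) (hsy : ∀ i, s i ≤ y i) :
    (fun i => log (1 + s i) - log (y i)) =O[l] (fun _ => (1 : ℝ)) :=
  .of_bound (log 2) (.of_forall fun i => by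
    simpa using abs_log_one_add_sub_log_le (hy i) (hs i) (hsy i))

end

def zBreak (n : ℕ) : ℝ := exp (exp n)

def zValue (k : ℕ) : ℝ := exp (k - exp k)

theorem zBreak_pos (n : ℕ) : 0 < zBreak n := exp_pos _

theorem strictMono_zBreak : StrictMono zBreak :=
  exp_strictMono.comp (exp_strictMono.comp Nat.strictMono_cast)

theorem tendsto_zBreak_atTop : Tendsto zBreak atTop atTop :=
  tendsto_exp_atTop.comp (tendsto_exp_atTop.comp tendsto_natCast_atTop_atTop)

theorem zValue_pos (k : ℕ) : 0 < zValue k := exp_pos _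

theorem antitone_zValue : Antitone zValue := by
  refine antitone_nat_of_succ_le fun k => exp_le_exp.2 ?_
  have h1 : 1 ≤ exp (k : ℝ) := one_le_exp k.cast_nonneg
  have h2 : exp ((k : ℝ) + 1) = exp k * exp 1 := exp_add _ _
  have he : 2 < exp 1 := by linarith [exp_one_gt_d9]
  push_cast
  nlinarith

theorem z_apply (t : ℝ) :
    z t = ⨆ k : ℕ, (Ico 0 (zBreak k)).indicator (fun _ => zValue k) t := rfl

theorem indicator_zValue_le (k : ℕ) (t : ℝ) :
    (Ico 0 (zBreak k)).indicator (fun _ => zValue k) t ≤ zValue 0 :=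
  (indicator_le_self' (fun _ _ => (zValue_pos k).le) t).trans (antitone_zValue k.zero_le)

theorem bddAbove_range_indicator_zValue (t : ℝ) :
    BddAbove (range fun k => (Ico 0 (zBreak k)).indicator (fun _ => zValue k) t) :=
  ⟨zValue 0, forall_mem_range.2 fun k => indicator_zValue_le k t⟩

theorem z_eq_zValue {k : ℕ} {t : ℝ} (ht : t ∈ Ico 0 (zBreak k))
    (hmin : ∀ j < k, zBreak j ≤ t) : z t = zValue k := by
  rw [z_apply]
  refine le_antisymm (ciSup_le fun j => ?_) ?_
  · by_cases hj : t ∈ Ico 0 (zBreak j)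
    · rw [indicator_of_mem hj]
      exact antitone_zValue (not_lt.1 fun hjk => (hmin j hjk).not_gt hj.2)
    · rw [indicator_of_notMem hj]
      exact (zValue_pos k).le
  · refine le_ciSup_of_le (bddAbove_range_indicator_zValue t) k ?_
    rw [indicator_of_mem ht]

theorem z_of_lt_zBreak_zero {t : ℝ} (ht : t ∈ Ico 0 (zBreak 0)) : z t = zValue 0 :=
  z_eq_zValue ht fun _ hj => absurd hj (Nat.not_lt_zero _)

theorem z_of_mem_Ico_zBreak {n : ℕ} {t : ℝ} (ht : t ∈ Ico (zBreak n) (zBreak (n + 1))) :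
    z t = zValue (n + 1) :=
  z_eq_zValue ⟨(zBreak_pos n).le.trans ht.1, ht.2⟩ fun _ hj =>
    (strictMono_zBreak.monotone (Nat.lt_succ_iff.1 hj)).trans ht.1

theorem z_nonneg (t : ℝ) : 0 ≤ z t :=
  (indicator_nonneg (fun _ _ => (zValue_pos 0).le) t).trans
    (le_ciSup (bddAbove_range_indicator_zValue t) 0)

theorem z_le_zValue_zero (t : ℝ) : z t ≤ zValue 0 :=
  ciSup_le fun k => indicator_zValue_le k t

theorem measurable_z : Measurable z :=
  Measurable.iSup fun _ => measurable_const.indicator measurableSet_Ico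

theorem intervalIntegrable_z (a b : ℝ) : IntervalIntegrable z volume a b :=
  (intervalIntegrable_const (c := zValue 0)).mono_fun measurable_z.aestronglyMeasurable
    (ae_of_all _ fun t => by
      simpa [abs_of_nonneg (z_nonneg t), abs_of_pos (zValue_pos 0)] using z_le_zValue_zero t)

def zDefect (k : ℕ) : ℝ := exp (k + 1 + exp k - exp (k + 1))

theorem zBreak_succ_sub_mul_zValue (n : ℕ) :
    (zBreak (n + 1) - zBreak n) * zValue (n + 1) = exp (n + 1) - zDefect n := by
  simp only [zBreak, zValue, zDefect, Nat.cast_succ, sub_mul, ← exp_add]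
  ring_nf

theorem integral_z_zBreak_succ (n : ℕ) :
    ∫ t in (0 : ℝ)..zBreak (n + 1), z t =
      (∫ t in (0 : ℝ)..zBreak n, z t) + (exp (n + 1) - zDefect n) := by
  rw [← intervalIntegral.integral_add_adjacent_intervals (intervalIntegrable_z _ _)
      (intervalIntegrable_z _ _),
    intervalIntegral_eq_of_eqOn_Ioo (strictMono_zBreak n.lt_succ_self).le
      fun _ ht => z_of_mem_Ico_zBreak (Ioo_subset_Ico_self ht),
    zBreak_succ_sub_mul_zValue]

theorem integral_z_zBreak (n : ℕ) :
    ∫ t in (0 : ℝ)..zBreak n, z t =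
      exp 1 / (exp 1 - 1) * exp n + (1 - exp 1 / (exp 1 - 1)) -
        ∑ k ∈ Finset.range n, zDefect k := by
  have he : exp 1 - 1 ≠ 0 := by linarith [exp_one_gt_d9]
  induction n with
  | zero =>
    rw [intervalIntegral_eq_of_eqOn_Ioo (zBreak_pos 0).le
      fun _ ht => z_of_lt_zBreak_zero (Ioo_subset_Ico_self ht)]
    simp [zBreak, zValue, ← exp_add]
  | succ n ih =>
    rw [integral_z_zBreak_succ, ih, Finset.sum_range_succ, Nat.cast_succ, exp_add]
    field_simp
    ring

theorem summable_zDefect : Summable zDefect := by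
  refine (summable_exp_nat_mul_iff.2 (show 2 - exp 1 < 0 by linarith [exp_one_gt_d9]))
    |>.of_nonneg_of_le (fun _ => (exp_pos _).le) fun k => exp_le_exp.2 ?_
  have h1 : (k : ℝ) + 1 ≤ exp k := add_one_le_exp _
  have h2 : exp ((k : ℝ) + 1) = exp k * exp 1 := exp_add _ _
  nlinarith [exp_one_gt_d9]

theorem isBigO_integral_z_zBreak :
    (fun n : ℕ => (∫ t in (0 : ℝ)..zBreak n, z t) - exp 1 / (exp 1 - 1) * exp n) =O[atTop]
      (fun _ => (1 : ℝ)) := by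
  refine ((isBigO_const_one ℝ (1 - exp 1 / (exp 1 - 1)) atTop).sub
    (summable_zDefect.hasSum.tendsto_sum_nat.isBigO_one ℝ)).congr_left fun n => ?_
  rw [integral_z_zBreak]
  ring

theorem tendsto_integral_z_zBreak :
    Tendsto (fun n => (log (1 + zBreak n))⁻¹ * ∫ t in (0 : ℝ)..zBreak n, z t) atTop
      (𝓝 (exp 1 / (exp 1 - 1))) := by
  refine tendsto_inv_mul_of_sub_isBigO_one (tendsto_exp_atTop.comp tendsto_natCast_atTop_atTop)
    isBigO_integral_z_zBreak ?_
  simpa [zBreak] using isBigO_log_one_add_sub_log (s := zBreak) (y := zBreak)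
    (fun _ => one_le_exp (exp_pos _).le) (fun n => half_le_self (zBreak_pos n).le) fun _ => le_rfl

def zMid (n : ℕ) : ℝ := (zBreak (n + 1) + zBreak n) / 2

theorem tendsto_zMid_atTop : Tendsto zMid atTop atTop :=
  tendsto_atTop_mono (fun n => by simp only [zMid]; linarith [strictMono_zBreak n.lt_succ_self])
    tendsto_zBreak_atTop

theorem integral_z_zMid (n : ℕ) :
    ∫ t in (0 : ℝ)..zMid n, z t =
      (∫ t in (0 : ℝ)..zBreak n, z t) + (exp (n + 1) - zDefect n) / 2 := by
  have hlt := strictMono_zBreak n.lt_succ_self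
  have hmid : zBreak n ≤ zMid n ∧ zMid n < zBreak (n + 1) := by
    constructor <;> simp only [zMid] <;> linarith
  rw [← intervalIntegral.integral_add_adjacent_intervals (intervalIntegrable_z _ (zBreak n))
      (intervalIntegrable_z _ _),
    intervalIntegral_eq_of_eqOn_Ioo hmid.1 fun _ ht =>
      z_of_mem_Ico_zBreak ⟨ht.1.le, ht.2.trans hmid.2⟩,
    ← zBreak_succ_sub_mul_zValue, zMid]
  ring

theorem tendsto_integral_z_zMid :
    Tendsto (fun n => (log (1 + zMid n))⁻¹ * ∫ t in (0 : ℝ)..zMid n, z t) atTop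
      (𝓝 ((exp 1 - 1)⁻¹ + 1 / 2)) := by
  have he : exp 1 - 1 ≠ 0 := by linarith [exp_one_gt_d9]
  refine tendsto_inv_mul_of_sub_isBigO_one (x := fun n : ℕ => exp ((n : ℝ) + 1))
    (tendsto_exp_atTop.comp (tendsto_atTop_add_const_right _ 1 tendsto_natCast_atTop_atTop))
    ?_ ?_
  · refine (isBigO_integral_z_zBreak.sub
      ((summable_zDefect.tendsto_atTop_zero.div_const 2).isBigO_one ℝ)).congr_left fun n => ?_
    rw [integral_z_zMid, exp_add]
    field_simp
    ring
  · have hlt n := strictMono_zBreak.monotone (Nat.le_succ n)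
    simpa [zBreak] using isBigO_log_one_add_sub_log (s := zMid) (y := fun n => zBreak (n + 1))
      (fun _ => one_le_exp (exp_pos _).le) (fun n => by simp only [zMid]; linarith [zBreak_pos n])
      (fun n => by simp only [zMid]; linarith [hlt n])

theorem z_averages_divergent :
    Tendsto (fun n : ℕ =>
        (Real.log (1 + Real.exp (Real.exp n)))⁻¹ * ∫ s in (0:ℝ)..(Real.exp (Real.exp n)), z s)
      atTop (nhds (Real.exp 1 / (Real.exp 1 - 1))) ∧
    Tendsto (fun n : ℕ =>
        (Real.log (1 + (Real.exp (Real.exp (n + 1)) + Real.exp (Real.exp n)) / 2))⁻¹ *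
          ∫ s in (0:ℝ)..((Real.exp (Real.exp (n + 1)) + Real.exp (Real.exp n)) / 2), z s)
      atTop (nhds ((Real.exp 1 - 1)⁻¹ + 1 / 2)) ∧
    ¬ ∃ L : ℝ, Tendsto (fun t : ℝ => (Real.log (1 + t))⁻¹ * ∫ s in (0:ℝ)..t, z s)
        atTop (nhds L) := by
  refine ⟨tendsto_integral_z_zBreak, by simpa [zMid, zBreak] using tendsto_integral_z_zMid, ?_⟩
  rintro ⟨L, hL⟩
  have h₁ := tendsto_nhds_unique (hL.comp tendsto_zBreak_atTop) tendsto_integral_z_zBreak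
  have h₂ := tendsto_nhds_unique (hL.comp tendsto_zMid_atTop) tendsto_integral_z_zMid
  have he : exp 1 - 1 ≠ 0 := by linarith [exp_one_gt_d9]
  field_simp at h₁ h₂
  exact he (by linear_combination h₂ - 2 * h₁)
end
end

section
/- Let ω be any exponentiation invariant generalized limit on L∞(0,∞) and define x(t) = (e/(e−1))·Σ_{k≥0}(e^k/log t)·χ_{[e^{e^k}, e^{e^{k+1}})}(t). Then ω(x) = 1. -/
open Real Filter MeasureTheory

noncomputable section

/-- A function on `(0,∞)` (modelled on all of `ℝ`) is (essentially) bounded. -/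
def Bdd (f : ℝ → ℝ) : Prop := ∃ C, ∀ t, |f t| ≤ C

/-- A generalized limit: a positive, normalized linear functional on `L∞(0,∞)`
(modelled as bounded functions `ℝ → ℝ`) which extends the limit at infinity. -/
structure GenLimit where
  ω : (ℝ → ℝ) → ℝ
  add : ∀ f g, Bdd f → Bdd g → ω (f + g) = ω f + ω g
  smul : ∀ (c : ℝ) f, Bdd f → ω (c • f) = c * ω f
  pos : ∀ f, Bdd f → (∀ t, 0 ≤ f t) → 0 ≤ ω f
  lim : ∀ f (c : ℝ), Bdd f → Tendsto f atTop (nhds c) → ω f = c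

/-- Exponentiation invariance: `ω(x ∘ (t ↦ t^a)) = ω(x)` for all `a > 0`. -/
def GenLimit.ExpInvariant (γ : GenLimit) : Prop :=
  ∀ f, Bdd f → ∀ a > (0:ℝ), γ.ω (fun t => f (t ^ a)) = γ.ω f

/-- Dilation invariance: `ω(x ∘ (t ↦ βt)) = ω(x)` for all `β > 0`. -/
def GenLimit.DilInvariant (γ : GenLimit) : Prop :=
  ∀ f, Bdd f → ∀ β > (0:ℝ), γ.ω (fun t => f (β * t)) = γ.ω f

/-- Translation invariance: `ω(x(·+l)) = ω(x)` for all `l > 0`. -/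
def GenLimit.TransInvariant (γ : GenLimit) : Prop :=
  ∀ f, Bdd f → ∀ l > (0:ℝ), γ.ω (fun t => f (t + l)) = γ.ω f

/-- The function `x(t) = (e/(e-1)) Σ_{k≥0} (e^k / log t) χ_{[e^{e^k}, e^{e^{k+1}})}(t)`. -/
def x : ℝ → ℝ := fun t =>
  (Real.exp 1 / (Real.exp 1 - 1)) *
    ∑' k : ℕ, Set.indicator (Set.Ico (Real.exp (Real.exp k)) (Real.exp (Real.exp (k + 1))))
      (fun _ => Real.exp k / Real.log t) t


/-!
Exponentiation invariance of `ω` is translation invariance of `f ↦ ω (f ∘ log ∘ log)`, because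
`log (log (t ^ exp l)) = log (log t) + l`. On `[e, ∞)`, `x = xProfile ∘ log ∘ log` with the
`1`-periodic profile `xProfile s = e/(e-1) · exp (-fract s)`, whose mean over a period is `1`.
Translation invariance makes `ω x` equal to the value of that functional at each Riemann sum
`(1/n) ∑_{j<n} xProfile (· + j/n)`. Since `exp (-fract ·)` turns the shifts `j/n` into powers of
`exp (-1/n)`, these sums are geometric; they lie in `[exp (-1/n), exp (1/n)]`, and `n → ∞` gives
`ω x = 1`.
-/

open Finset Topology

namespace Bdd

variable {f g : ℝ → ℝ}

lemma comp (hf : Bdd f) (φ : ℝ → ℝ) : Bdd (f ∘ φ) :=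
  let ⟨C, hC⟩ := hf
  ⟨C, fun t => hC (φ t)⟩

lemma const (c : ℝ) : Bdd fun _ => c := ⟨|c|, fun _ => le_rfl⟩

lemma add (hf : Bdd f) (hg : Bdd g) : Bdd (f + g) :=
  let ⟨C, hC⟩ := hf
  let ⟨D, hD⟩ := hg
  ⟨C + D, fun t => (abs_add_le _ _).trans (add_le_add (hC t) (hD t))⟩

lemma smul (hf : Bdd f) (c : ℝ) : Bdd (c • f) :=
  let ⟨C, hC⟩ := hf
  ⟨|c| * C, fun t => by
    rw [Pi.smul_apply, smul_eq_mul, abs_mul]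
    exact mul_le_mul_of_nonneg_left (hC t) (abs_nonneg c)⟩

lemma sub (hf : Bdd f) (hg : Bdd g) : Bdd (f - g) := by
  simpa [sub_eq_add_neg] using hf.add (hg.smul (-1))

lemma sum {ι : Type*} (s : Finset ι) {F : ι → ℝ → ℝ} (hF : ∀ i ∈ s, Bdd (F i)) :
    Bdd (∑ i ∈ s, F i) := by
  classical
  induction s using Finset.induction_on with
  | empty => exact const 0
  | insert i s hi ih =>
    rw [sum_insert hi]
    exact (hF i (mem_insert_self i s)).add (ih fun j hj => hF j (mem_insert_of_mem hj))

end Bdd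

namespace GenLimit

variable (γ : GenLimit) {f g : ℝ → ℝ}

lemma ω_const (c : ℝ) : γ.ω (fun _ => c) = c :=
  γ.lim _ c (Bdd.const c) tendsto_const_nhds

lemma ω_sub (hf : Bdd f) (hg : Bdd g) : γ.ω (f - g) = γ.ω f - γ.ω g := by
  have := γ.add g (f - g) hg (hf.sub hg)
  rw [add_sub_cancel] at this
  linarith

lemma ω_congr (hf : Bdd f) (hg : Bdd g) (h : f =ᶠ[atTop] g) : γ.ω f = γ.ω g := by
  have : γ.ω (f - g) = 0 :=
    γ.lim _ 0 (hf.sub hg) (tendsto_const_nhds.congr' (h.mono fun t ht => by simp [ht]))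
  linarith [γ.ω_sub hf hg]

lemma ω_mono (hf : Bdd f) (hg : Bdd g) (h : f ≤ g) : γ.ω f ≤ γ.ω g := by
  have := γ.pos (g - f) (hg.sub hf) fun t => sub_nonneg.2 (h t)
  linarith [γ.ω_sub hg hf]

lemma ω_mem_Icc {a b : ℝ} (h : ∀ t, f t ∈ Set.Icc a b) : γ.ω f ∈ Set.Icc a b := by
  have hf : Bdd f := ⟨max |a| |b|, fun t => abs_le_max_abs_abs (h t).1 (h t).2⟩
  constructor
  · simpa only [ω_const] using γ.ω_mono (Bdd.const a) hf fun t => (h t).1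
  · simpa only [ω_const] using γ.ω_mono hf (Bdd.const b) fun t => (h t).2

lemma ω_sum {ι : Type*} (s : Finset ι) {F : ι → ℝ → ℝ} (hF : ∀ i ∈ s, Bdd (F i)) :
    γ.ω (∑ i ∈ s, F i) = ∑ i ∈ s, γ.ω (F i) := by
  classical
  induction s using Finset.induction_on with
  | empty => rw [sum_empty, sum_empty]; exact γ.ω_const 0
  | insert i s hi ih =>
    have hF' : ∀ j ∈ s, Bdd (F j) := fun j hj => hF j (mem_insert_of_mem hj)
    rw [sum_insert hi, sum_insert hi, γ.add _ _ (hF i (mem_insert_self i s)) (Bdd.sum s hF'),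
      ih hF']

def comp (φ : ℝ → ℝ) (hφ : Tendsto φ atTop atTop) : GenLimit where
  ω f := γ.ω (f ∘ φ)
  add _ _ hf hg := γ.add _ _ (hf.comp φ) (hg.comp φ)
  smul c _ hf := γ.smul c _ (hf.comp φ)
  pos _ hf h := γ.pos _ (hf.comp φ) fun t => h (φ t)
  lim _ c hf h := γ.lim _ c (hf.comp φ) (h.comp hφ)

variable {γ}

lemma ExpInvariant.transInvariant_comp_log_log (hγ : γ.ExpInvariant) :
    (γ.comp (fun t => log (log t)) (tendsto_log_atTop.comp tendsto_log_atTop)).TransInvariant := by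
  intro f hf l _
  change γ.ω (fun t => f (log (log t) + l)) = γ.ω (f ∘ fun t => log (log t))
  rw [← hγ _ (hf.comp _) (exp l) (exp_pos l)]
  refine γ.ω_congr (hf.comp _) (hf.comp _) ?_
  filter_upwards [eventually_gt_atTop 1] with t ht
  simp [log_rpow (by linarith : 0 < t), log_mul (exp_pos l).ne' (log_pos ht).ne', add_comm]

lemma TransInvariant.ω_add_const (hγ : γ.TransInvariant) (hf : Bdd f) {l : ℝ} (hl : 0 ≤ l) :
    γ.ω (fun s => f (s + l)) = γ.ω f := by
  rcases hl.eq_or_lt with rfl | hl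
  · simp
  · exact hγ f hf l hl

lemma TransInvariant.ω_riemannSum (hγ : γ.TransInvariant) (hf : Bdd f) {n : ℕ} (hn : 0 < n) :
    γ.ω (fun s => (∑ j ∈ range n, f (s + j / n)) / n) = γ.ω f := by
  have hshift : ∀ j ∈ range n, Bdd fun s => f (s + j / n) := fun j _ => hf.comp _
  have hfun : (fun s => (∑ j ∈ range n, f (s + j / n)) / n)
      = (n : ℝ)⁻¹ • ∑ j ∈ range n, fun s => f (s + j / n) := by
    ext s
    simp [Finset.sum_apply, div_eq_inv_mul]
  rw [hfun, γ.smul _ _ (Bdd.sum _ hshift), γ.ω_sum _ hshift,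
    sum_congr rfl fun j _ => hγ.ω_add_const hf (by positivity), sum_const, card_range,
    nsmul_eq_mul, inv_mul_cancel_left₀ (by positivity)]

end GenLimit

lemma Function.Periodic.sum_range_add_div {f : ℝ → ℝ} (hf : Function.Periodic f 1) {n : ℕ}
    (hn : 0 < n) : Function.Periodic (fun s => ∑ j ∈ range n, f (s + j / n)) (1 / n) := by
  intro s
  have hshift : ∀ j : ℕ, s + 1 / n + j / n = s + (j + 1 : ℕ) / n := fun j => by push_cast; ring
  have hwrap : f (s + n / n) = f (s + (0 : ℕ) / n) := by
    rw [div_self (by positivity), Nat.cast_zero, zero_div, add_zero, hf]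
  have htelescope := sum_range_succ' (fun j : ℕ => f (s + j / n)) n
  rw [sum_range_succ, hwrap] at htelescope
  simp only [hshift]
  linarith

lemma sum_range_exp_neg_fract_add_div {n : ℕ} (hn : 0 < n) (s : ℝ) :
    ∑ j ∈ range n, exp (-Int.fract (s + j / n))
      = exp (-(Int.fract (n * s) / n)) * ((1 - exp (-1)) / (1 - exp (-(1 / n)))) := by
  have hn' : (0 : ℝ) < n := by exact_mod_cast hn
  set ε := Int.fract (n * s) / n
  have hε : 0 ≤ ε ∧ ε < 1 / n := by
    constructor
    · have := Int.fract_nonneg ((n : ℝ) * s); positivity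
    · exact div_lt_div_of_pos_right (Int.fract_lt_one _) hn'
  have hper := ((Int.fract_periodic ℝ).comp fun y => exp (-y)).sum_range_add_div hn
  have hs : s = ε + ⌊(n : ℝ) * s⌋ * (1 / n) := by
    simp only [ε, ← Int.self_sub_floor]; field_simp; ring
  set r := exp (-(1 / n))
  have hr : r ≠ 1 := by simp [r, hn'.ne']
  have hterm : ∀ j ∈ range n, exp (-Int.fract (ε + j / n)) = exp (-ε) * r ^ j := by
    intro j hj
    have hj : (j : ℝ) + 1 ≤ n := by exact_mod_cast mem_range.1 hj
    have hlt : ε + j / n < 1 :=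
      calc ε + j / n < 1 / n + j / n := by linarith [hε.2]
        _ = (j + 1) / n := by ring
        _ ≤ 1 := (div_le_one hn').2 hj
    rw [Int.fract_eq_self.2 ⟨by linarith [hε.1, (by positivity : (0 : ℝ) ≤ j / n)], hlt⟩,
      neg_add, exp_add, ← exp_nat_mul]
    congr 2
    ring
  have hrn : r ^ n = exp (-1) := by
    rw [← exp_nat_mul]; congr 1; field_simp
  calc ∑ j ∈ range n, exp (-Int.fract (s + j / n))
      = ∑ j ∈ range n, exp (-Int.fract (ε + j / n)) := by
        conv_lhs => rw [hs]
        exact (hper.int_mul _) ε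
    _ = exp (-ε) * ((1 - exp (-1)) / (1 - r)) := by
        rw [sum_congr rfl hterm, ← mul_sum, geom_sum_eq hr, hrn, ← neg_div_neg_eq, neg_sub, neg_sub]

lemma one_le_div_one_sub_exp_neg {y : ℝ} (hy : 0 < y) : 1 ≤ y / (1 - exp (-y)) := by
  have hpos : 0 < 1 - exp (-y) := by simpa using exp_lt_one_iff.2 (neg_lt_zero.2 hy)
  rw [one_le_div hpos]
  linarith [one_sub_le_exp_neg y]

lemma div_one_sub_exp_neg_le_exp {y : ℝ} (hy : 0 < y) : y / (1 - exp (-y)) ≤ exp y := by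
  have hpos : 0 < 1 - exp (-y) := by simpa using exp_lt_one_iff.2 (neg_lt_zero.2 hy)
  rw [div_le_iff₀ hpos, mul_sub, mul_one, ← exp_add, add_neg_cancel, exp_zero]
  linarith [add_one_le_exp y]

def xProfile (s : ℝ) : ℝ := exp 1 / (exp 1 - 1) * exp (-Int.fract s)

lemma abs_xProfile_le (s : ℝ) : |xProfile s| ≤ exp 1 / (exp 1 - 1) := by
  have he : 0 < exp 1 - 1 := by linarith [add_one_le_exp 1]
  have hle : exp (-Int.fract s) ≤ 1 := exp_le_one_iff.2 (neg_nonpos.2 (Int.fract_nonneg s))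
  rw [xProfile, abs_of_pos (by positivity)]
  exact mul_le_of_le_one_right (by positivity) hle

lemma bdd_xProfile : Bdd xProfile := ⟨_, abs_xProfile_le⟩

lemma riemannSum_xProfile_mem_Icc {n : ℕ} (hn : 0 < n) (s : ℝ) :
    (∑ j ∈ range n, xProfile (s + j / n)) / n ∈ Set.Icc (exp (-(1 / n))) (exp (1 / n)) := by
  have hn' : (0 : ℝ) < n := by exact_mod_cast hn
  have he : exp 1 - 1 ≠ 0 := by linarith [add_one_le_exp 1]
  set ε := Int.fract (n * s) / n
  have hε : 0 ≤ ε ∧ ε ≤ 1 / n := by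
    constructor
    · have := Int.fract_nonneg ((n : ℝ) * s); positivity
    · exact div_le_div_of_nonneg_right (Int.fract_lt_one _).le hn'.le
  have hsum : (∑ j ∈ range n, xProfile (s + j / n)) / n
      = exp (-ε) * ((1 / n) / (1 - exp (-(1 / n)))) := by
    simp only [xProfile]
    rw [← mul_sum, sum_range_exp_neg_fract_add_div hn, exp_neg 1]
    field_simp
    ring
  have hq := one_le_div_one_sub_exp_neg (one_div_pos.2 hn')
  have hq' := div_one_sub_exp_neg_le_exp (one_div_pos.2 hn')
  rw [hsum]
  constructor
  · calc exp (-(1 / n)) ≤ exp (-ε) * 1 := by rw [mul_one]; exact exp_le_exp.2 (by linarith)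
      _ ≤ _ := by gcongr
  · calc _ ≤ 1 * exp (1 / n) := by
          gcongr
          exact exp_le_one_iff.2 (by linarith)
      _ = _ := one_mul _

lemma x_exp_exp {s : ℝ} (hs : 0 ≤ s) : x (exp (exp s)) = xProfile s := by
  have hmem : ∀ k : ℕ, exp (exp s) ∈ Set.Ico (exp (exp k)) (exp (exp (k + 1))) ↔ ⌊s⌋₊ = k := by
    intro k
    rw [Nat.floor_eq_iff hs]
    simp only [Set.mem_Ico, exp_le_exp, exp_lt_exp]
  rw [x, xProfile, tsum_eq_single ⌊s⌋₊ fun k hk =>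
      Set.indicator_of_notMem (fun h => hk ((hmem k).1 h).symm) _,
    Set.indicator_of_mem ((hmem _).2 rfl), log_exp, ← exp_sub, natCast_floor_eq_intCast_floor hs,
    Int.fract, neg_sub]

lemma x_of_lt_exp_one {t : ℝ} (ht : t < exp 1) : x t = 0 := by
  have hnot : ∀ k : ℕ, t ∉ Set.Ico (exp (exp k)) (exp (exp (k + 1))) := fun k h =>
    ht.not_ge ((exp_le_exp.2 (one_le_exp k.cast_nonneg)).trans h.1)
  simp [x, Set.indicator_of_notMem (hnot _)]

lemma x_of_exp_one_le {t : ℝ} (ht : exp 1 ≤ t) : x t = xProfile (log (log t)) := by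
  have hlog : 1 ≤ log t := by simpa using log_le_log (exp_pos 1) ht
  rw [← x_exp_exp (log_nonneg hlog), exp_log (by linarith), exp_log (by linarith [exp_pos 1])]

lemma bdd_x : Bdd x := by
  refine ⟨exp 1 / (exp 1 - 1), fun t => ?_⟩
  rcases lt_or_ge t (exp 1) with ht | ht
  · rw [x_of_lt_exp_one ht, abs_zero]
    have : 0 < exp 1 - 1 := by linarith [add_one_le_exp 1]
    positivity
  · rw [x_of_exp_one_le ht]
    exact abs_xProfile_le _

theorem expInvariant_omega_x_eq_one (γ : GenLimit) (hexp : γ.ExpInvariant) :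
    γ.ω x = 1 := by
  set γ' := γ.comp (fun t => log (log t)) (tendsto_log_atTop.comp tendsto_log_atTop)
  have hx : γ.ω x = γ'.ω xProfile :=
    γ.ω_congr bdd_x (bdd_xProfile.comp _)
      ((eventually_ge_atTop (exp 1)).mono fun t ht => x_of_exp_one_le ht)
  have hbounds : ∀ n : ℕ, 0 < n → γ.ω x ∈ Set.Icc (exp (-(1 / n))) (exp (1 / n)) := by
    intro n hn
    rw [hx, ← hexp.transInvariant_comp_log_log.ω_riemannSum bdd_xProfile hn]
    exact γ'.ω_mem_Icc (riemannSum_xProfile_mem_Icc hn)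
  have h0 := tendsto_one_div_atTop_nhds_zero_nat (𝕜 := ℝ)
  have hup : Tendsto (fun n : ℕ => exp (1 / n)) atTop (𝓝 1) := by
    simpa only [Function.comp_def, exp_zero] using (continuous_exp.tendsto 0).comp h0
  have hlow : Tendsto (fun n : ℕ => exp (-(1 / n))) atTop (𝓝 1) := by
    simpa only [Function.comp_def, exp_zero, neg_zero] using (continuous_exp.tendsto _).comp h0.neg
  refine le_antisymm (ge_of_tendsto hup ?_) (le_of_tendsto hlow ?_)
  · exact (eventually_gt_atTop 0).mono fun n hn => (hbounds n hn).2
  · exact (eventually_gt_atTop 0).mono fun n hn => (hbounds n hn).1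
end
end
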